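/- arXiv:1911.12754 — 3 statements merged into one kernel-verified Lean document; each statement's English description precedes it below -/
import Mathlib

section
/- For the instrumental variable model on three vertices with directed edges 1 → 2 and 2 → 3 and bidirected edge 2 ↔ 3: if Σ = (I − Λ)^{−T} Ω (I − Λ)^{−1} with Λ supported on the directed edges, Ω supported on the diagonal and the bidirected edge, Σ positive definite, and λ_{12} ≠ 0, then λ_{12} = σ_{12}/σ_{11} and λ_{23} = σ_{13}/σ_{12}. -/
open Matrix

/-!
Vertex 1 (index `0`) is a source with no bidirected edges, so its covariance with any vertex `j` is
`ω₁₁` times the total effect of `1` on `j`, i.e. `ω₁₁ * ((I - Λ)⁻¹)₁ⱼ`. For the path `1 → 2 → 3`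
the total effects are `1, λ₁₂, λ₁₂ λ₂₃`, and dividing consecutive ones gives the two formulas.
-/

theorem transpose_mul_mul_apply_of_source {ι R : Type*} [Fintype ι] [DecidableEq ι] [CommRing R]
    (B Ω : Matrix ι ι R) (i₀ j : ι) (hB₀ : B i₀ i₀ = 1) (hB : ∀ i ≠ i₀, B i i₀ = 0)
    (hΩ : ∀ l ≠ i₀, Ω i₀ l = 0) :
    (Bᵀ * Ω * B) i₀ j = Ω i₀ i₀ * B i₀ j := by
  have hrow : (Bᵀ * Ω) i₀ = Ω i₀ := by
    ext l
    rw [mul_apply, Fintype.sum_eq_single i₀ fun i hi => by simp [hB i hi], transpose_apply, hB₀,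
      one_mul]
  rw [mul_apply, hrow, Fintype.sum_eq_single i₀ fun l hl => by simp [hΩ l hl]]

theorem inv_one_sub_fin_three_path {R : Type*} [CommRing R] (a b : R) :
    (1 - !![0, a, 0; 0, 0, b; 0, 0, 0])⁻¹ = !![1, a, a * b; 0, 1, b; 0, 0, 1] := by
  refine inv_eq_right_inv ?_
  rw [one_fin_three]
  simp

theorem stmt_4_general (l12 l23 : ℝ) (Ω : Matrix (Fin 3) (Fin 3) ℝ)
    (hΩpd : Ω.PosDef)
    (hΩ01 : Ω 0 1 = 0) (hΩ02 : Ω 0 2 = 0)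
    (Λ : Matrix (Fin 3) (Fin 3) ℝ)
    (hΛ : Λ = !![0, l12, 0; 0, 0, l23; 0, 0, 0])
    (S : Matrix (Fin 3) (Fin 3) ℝ)
    (hS : S = ((1 - Λ)⁻¹)ᵀ * Ω * (1 - Λ)⁻¹)
    (hl : l12 ≠ 0) :
    l12 = S 0 1 / S 0 0 ∧ l23 = S 0 2 / S 0 1 := by
  have hcov (j : Fin 3) : S 0 j = Ω 0 0 * !![1, l12, l12 * l23; 0, 1, l23; 0, 0, 1] 0 j := by
    rw [hS, hΛ, inv_one_sub_fin_three_path]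
    refine transpose_mul_mul_apply_of_source _ _ _ _ rfl (fun i hi => ?_) (fun l hl => ?_)
    · fin_cases i <;> simp_all
    · fin_cases l <;> simp_all
  have hω : Ω 0 0 ≠ 0 := (hΩpd.diag_pos (i := 0)).ne'
  simp only [hcov, of_apply, cons_val', cons_val_zero, cons_val_one, cons_val_two, empty_val',
    cons_val_fin_one, head_cons, tail_cons]
  constructor <;> field_simp

/-- Instrumental variable model (edges 1→2, 2→3, 2↔3): if `λ₁₂ ≠ 0` then the
regression coefficients are recovered as `λ₁₂ = σ₁₂/σ₁₁`, `λ₂₃ = σ₁₃/σ₁₂`. -/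
theorem stmt_4 (l12 l23 : ℝ) (Ω : Matrix (Fin 3) (Fin 3) ℝ)
    (hΩpd : Ω.PosDef)
    (hΩ01 : Ω 0 1 = 0) (hΩ10 : Ω 1 0 = 0) (hΩ02 : Ω 0 2 = 0) (hΩ20 : Ω 2 0 = 0)
    (Λ : Matrix (Fin 3) (Fin 3) ℝ)
    (hΛ : Λ = !![0, l12, 0; 0, 0, l23; 0, 0, 0])
    (S : Matrix (Fin 3) (Fin 3) ℝ)
    (hS : S = ((1 - Λ)⁻¹)ᵀ * Ω * (1 - Λ)⁻¹)
    (hSpd : S.PosDef)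
    (hl : l12 ≠ 0) :
    l12 = S 0 1 / S 0 0 ∧ l23 = S 0 2 / S 0 1 :=
  stmt_4_general l12 l23 Ω hΩpd hΩ01 hΩ02 Λ hΛ S hS hl
end

section
/- For the graph on vertices {1,2,3,4} with directed edges 1→2, 1→3, 1→4 and bidirected edges 1↔2, 1↔3, 1↔4 (three bows): the three constraint equations b_{32} = b_{42} = b_{43} = 0 reduce, after eliminating λ_{13} and λ_{14}, to a quadratic equation aλ_{12}² + bλ_{12} + c = 0 in λ_{12}, with a = σ_{11}²σ_{34} − σ_{11}σ_{13}σ_{14}, b = 2σ_{12}σ_{13}σ_{14} − 2σ_{11}σ_{12}σ_{34}, c = σ_{12}²σ_{34} − σ_{12}σ_{13}σ_{24} − σ_{12}σ_{14}σ_{23} + σ_{11}σ_{23}σ_{24}, whenever σ_{12} − λ_{12}σ_{11} ≠ 0. -/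
/-- For the three-bow graph on `{1,2,3,4}`: eliminating `λ₁₃, λ₁₄` from
`b₃₂ = b₄₂ = 0` (when `σ₁₂ - λ₁₂σ₁₁ ≠ 0`), the remaining constraint `b₄₃ = 0`
is equivalent to the quadratic `aλ₁₂² + bλ₁₂ + c = 0` with the stated
coefficients. -/
theorem stmt_8 (σ11 σ12 σ13 σ14 σ23 σ24 σ34 : ℝ) (l12 l13 l14 : ℝ)
    (hb32 : σ23 - l13 * σ12 - l12 * (σ13 - l13 * σ11) = 0)
    (hb42 : σ24 - l14 * σ12 - l12 * (σ14 - l14 * σ11) = 0)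
    (hden : σ12 - l12 * σ11 ≠ 0) :
    l13 = (σ23 - l12 * σ13) / (σ12 - l12 * σ11) ∧
    l14 = (σ24 - l12 * σ14) / (σ12 - l12 * σ11) ∧
    (σ34 - l14 * σ13 - l13 * (σ14 - l14 * σ11) = 0 ↔
      (σ11 ^ 2 * σ34 - σ11 * σ13 * σ14) * l12 ^ 2 +
        (2 * σ12 * σ13 * σ14 - 2 * σ11 * σ12 * σ34) * l12 +
        (σ12 ^ 2 * σ34 - σ12 * σ13 * σ24 - σ12 * σ14 * σ23 + σ11 * σ23 * σ24)
          = 0) := by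
  have h13 : l13 * (σ12 - l12 * σ11) = σ23 - l12 * σ13 := by linarith [hb32]
  have h14 : l14 * (σ12 - l12 * σ11) = σ24 - l12 * σ14 := by linarith [hb42]
  refine ⟨?_, ?_, ?_⟩
  · field_simp
    linarith [h13]
  · field_simp
    linarith [h14]
  · have hd2 : (σ12 - l12 * σ11) ^ 2 ≠ 0 := pow_ne_zero _ hden
    constructor
    · intro h
      have : (σ34 - l14 * σ13 - l13 * (σ14 - l14 * σ11)) * (σ12 - l12 * σ11) ^ 2 = 0 := by
        rw [h]; ring
      linear_combination this - (-(σ14 * (σ12 - l12 * σ11)) + σ11 * (σ24 - l12 * σ14)) * h13 - (-(σ13 * (σ12 - l12 * σ11)) + σ11 * l13 * (σ12 - l12 * σ11)) * h14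
    · intro h
      have key : (σ34 - l14 * σ13 - l13 * (σ14 - l14 * σ11)) * (σ12 - l12 * σ11) ^ 2 = 0 := by
        linear_combination h + (-(σ14 * (σ12 - l12 * σ11)) + σ11 * (σ24 - l12 * σ14)) * h13 + (-(σ13 * (σ12 - l12 * σ11)) + σ11 * l13 * (σ12 - l12 * σ11)) * h14
      exact (mul_eq_zero.mp key).resolve_right hd2
end

section
/- Let G = (V, D, B) be an HTC-identifiable directed mixed graph with certificate sets {S_v : v ∈ V} having no subset cycles, and suppose i, j ∈ V are such that i ↔ j ∉ B, i ∉ S_j, and j ∉ S_i. Then the graph G' obtained by adding the bidirected edge i ↔ j is HTC-identifiable with the same sets {S_v}. -/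
variable {V : Type*} [Fintype V] [DecidableEq V]

/-- A half-trek from `v` to `j` (as a proposition): either a directed path of
length ≥ 1 from `v` to `j`, or a bidirected edge `v ↔ w` followed by a
directed path (possibly of length 0) from `w` to `j`. -/
def IsHalfTrek (D B : V → V → Prop) (v j : V) : Prop :=
  Relation.TransGen D v j ∨ ∃ w, B v w ∧ Relation.ReflTransGen D w j

/-- The parents of `v` in the directed part `D`. -/
def pa (D : V → V → Prop) [DecidableRel D] (v : V) : Finset V :=
  Finset.univ.filter (fun w => D w v)

/-- The siblings of `v` in the bidirected part `B`. -/
def sib (B : V → V → Prop) [DecidableRel B] (v : V) : Finset V :=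
  Finset.univ.filter (fun w => B v w)

/-- A half-trek from `y` to `b` recorded with its right-hand directed part:
it either starts with a bidirected edge `y ↔ first`, or is purely directed
(`y = first`) with at least one directed edge; `first :: tail` is a directed
walk ending at `b`. The left side of the half-trek is just `{y}`. -/
structure HalfTrekPath (D B : V → V → Prop) (y b : V) where
  first : V
  tail : List V
  start : B y first ∨ (y = first ∧ tail ≠ [])
  chain : List.Chain D first tail
  ends : (first :: tail).getLast (List.cons_ne_nil _ _) = b

/-- The right-hand vertex set of a half-trek. -/
def HalfTrekPath.right {D B : V → V → Prop} {y b : V}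
    (t : HalfTrekPath D B y b) : Finset V :=
  (t.first :: t.tail).toFinset

/-- `Y` satisfies the half-trek criterion with respect to `v`:
`|Y| = |pa(v)|`, `Y ∩ ({v} ∪ sib(v)) = ∅`, and there is a system of
half-treks from `Y` onto `pa(v)` with no sided intersection (distinct sources
and pairwise disjoint right-hand sides). -/
def SatisfiesHTC (D B : V → V → Prop) [DecidableRel D]
    (Y : Finset V) (v : V) : Prop :=
  Y.card = (pa D v).card ∧
  (∀ y ∈ Y, y ≠ v ∧ ¬ B v y) ∧
  ∃ f : V → V, Set.BijOn f (Y : Set V) ((pa D v : Finset V) : Set V) ∧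
    ∃ t : ∀ y ∈ Y, HalfTrekPath D B y (f y),
      ∀ y (hy : y ∈ Y) z (hz : z ∈ Y), y ≠ z →
        Disjoint (t y hy).right (t z hz).right

/-- `G` is HTC-identifiable with certificate sets `S`: each `S v` satisfies the
half-trek criterion w.r.t. `v`, and there is a total order `≺` on `V` with
`w ≺ v` whenever `w ∈ S v` is half-trek reachable from `v`. -/
def HTCIdentifiableWith (D B : V → V → Prop) [DecidableRel D]
    (S : V → Finset V) : Prop :=
  (∀ v, SatisfiesHTC D B (S v) v) ∧
  ∃ lt : V → V → Prop, IsStrictTotalOrder V lt ∧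
    ∀ v w, w ∈ S v → IsHalfTrek D B v w → lt w v

/-- The sets `S` have no subset cycles: no sequence
`v₁ ∈ S v₂, v₂ ∈ S v₃, …, vₙ ∈ S v₁`. -/
def NoSubsetCycles (S : V → Finset V) : Prop :=
  ∀ v, ¬ Relation.TransGen (fun a b => a ∈ S b) v v

/-!
Adding `i ↔ j` changes neither parents nor the directed parts of half-treks, so every half-trek
system of `G` remains one of `G'`, and the only new siblings it creates are `i` of `j` and `j` of
`i`, which the hypotheses keep out of `S j` and `S i`. The half-trek reachability of `G'` may
grow, so the old order need not work; instead, since no subset cycles means the relation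
`w ∈ S v` is acyclic on the finite vertex set, it extends to a well-order, and that order
dominates `w ≺ v` for all `w ∈ S v`, half-trek reachable or not.
-/

def HalfTrekPath.monoBidirected {D B B' : V → V → Prop} (hBB' : ∀ a b, B a b → B' a b)
    {y b : V} (t : HalfTrekPath D B y b) : HalfTrekPath D B' y b :=
  ⟨t.first, t.tail, t.start.imp (hBB' _ _) id, t.chain, t.ends⟩

theorem SatisfiesHTC.monoBidirected {D B B' : V → V → Prop} [DecidableRel D] {Y : Finset V}
    {v : V} (h : SatisfiesHTC D B Y v) (hBB' : ∀ a b, B a b → B' a b)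
    (hsib : ∀ y ∈ Y, B' v y → B v y) : SatisfiesHTC D B' Y v := by
  obtain ⟨hcard, hY, f, hbij, t, hdisj⟩ := h
  exact ⟨hcard, fun y hy => ⟨(hY y hy).1, fun hB' => (hY y hy).2 (hsib y hy hB')⟩, f, hbij,
    fun y hy => (t y hy).monoBidirected hBB', hdisj⟩

theorem NoSubsetCycles.wellFounded {α : Type*} [Finite α] {S : α → Finset α}
    (hnc : NoSubsetCycles S) : WellFounded (fun a b => a ∈ S b) :=
  have : Std.Irrefl (Relation.TransGen fun a b => a ∈ S b) := ⟨hnc⟩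
  (Finite.wellFounded_of_trans_of_irrefl (Relation.TransGen fun a b => a ∈ S b)).mono
    fun _ _ h => .single h

theorem NoSubsetCycles.exists_isStrictTotalOrder {α : Type*} [Finite α] {S : α → Finset α}
    (hnc : NoSubsetCycles S) :
    ∃ lt : α → α → Prop, IsStrictTotalOrder α lt ∧ ∀ v w, w ∈ S v → lt w v := by
  have : IsWellFounded α (fun a b => a ∈ S b) := ⟨hnc.wellFounded⟩
  obtain ⟨lt, hle, hlt⟩ := IsWellFounded.exists_well_order_ge (fun a b => a ∈ S b)
  exact ⟨lt, inferInstance, fun v w hw => hle w v hw⟩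

theorem htcIdentifiableWith_of_noSubsetCycles {D B : V → V → Prop} [DecidableRel D]
    {S : V → Finset V} (hS : ∀ v, SatisfiesHTC D B (S v) v) (hnc : NoSubsetCycles S) :
    HTCIdentifiableWith D B S :=
  let ⟨lt, hlt, hlt_of_mem⟩ := hnc.exists_isStrictTotalOrder
  ⟨hS, lt, hlt, fun v w hw _ => hlt_of_mem v w hw⟩

theorem stmt_11_general (D B : V → V → Prop) [DecidableRel D]
    (S : V → Finset V)
    (hHTC : HTCIdentifiableWith D B S) (hnc : NoSubsetCycles S)
    (i j : V)
    (hiS : i ∉ S j) (hjS : j ∉ S i) :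
    HTCIdentifiableWith D
      (fun a b => B a b ∨ (a = i ∧ b = j) ∨ (a = j ∧ b = i)) S := by
  refine htcIdentifiableWith_of_noSubsetCycles (fun v => ?_) hnc
  refine (hHTC.1 v).monoBidirected (fun _ _ => Or.inl) fun y hy => ?_
  rintro (hvy | ⟨rfl, rfl⟩ | ⟨rfl, rfl⟩)
  · exact hvy
  · exact absurd hy hjS
  · exact absurd hy hiS

/-- Adding a bidirected edge `i ↔ j` with `i ↔ j ∉ B`, `i ∉ S j`, `j ∉ S i`
to an HTC-identifiable graph with no subset cycles yields an
HTC-identifiable graph with the same certificate sets. -/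
theorem stmt_11 (D B : V → V → Prop) [DecidableRel D]
    (hBsymm : Symmetric B) (S : V → Finset V)
    (hHTC : HTCIdentifiableWith D B S) (hnc : NoSubsetCycles S)
    (i j : V) (hij : i ≠ j) (hB : ¬ B i j)
    (hiS : i ∉ S j) (hjS : j ∉ S i) :
    HTCIdentifiableWith D
      (fun a b => B a b ∨ (a = i ∧ b = j) ∨ (a = j ∧ b = i)) S :=
  stmt_11_general D B S hHTC hnc i j hiS hjS
end
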